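/- Let β, δ ∈ ℂ with β ≠ 0 and Im δ ≠ 0, and γ ∈ ℝ nonzero. Then the images under f(z) = β/(γz + δ) of the positive real axis {t > 0} and the negative real axis {t < 0} are disjoint subsets of the same circle centered at β/(2i·Im δ) with radius |β|/(2|Im δ|). -/

import Mathlib

open Complex

theorem motoring_generating_branches
    (β δ : ℂ) (γ : ℝ) (hβ : β ≠ 0) (hδ : δ.im ≠ 0) (hγ : γ ≠ 0) :
    Disjoint
      ((fun t : ℝ => β / ((γ : ℂ) * t + δ)) '' Set.Ioi 0)
      ((fun t : ℝ => β / ((γ : ℂ) * t + δ)) '' Set.Iio 0) ∧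
    ((fun t : ℝ => β / ((γ : ℂ) * t + δ)) '' (Set.Ioi 0 ∪ Set.Iio 0)) ⊆
      {w : ℂ | ‖w - β / (2 * I * (δ.im : ℂ))‖
                 = ‖β‖ / (2 * |δ.im|)} := by
  have hzim : ∀ t : ℝ, ((γ : ℂ) * t + δ).im = δ.im := by
    intro t; simp
  have hzne : ∀ t : ℝ, (γ : ℂ) * t + δ ≠ 0 := by
    intro t h
    apply hδ
    rw [← hzim t, h]; simp
  constructor
  · rw [Set.disjoint_left]
    rintro w ⟨t1, ht1, rfl⟩ ⟨t2, ht2, heq⟩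
    simp only at heq
    have hz : (γ : ℂ) * t2 + δ = (γ : ℂ) * t1 + δ := by
      have h1 := hzne t1
      have h2 := hzne t2
      field_simp at heq
      exact heq.symm
    have : (t2 : ℂ) = t1 := by
      have hγc : (γ : ℂ) ≠ 0 := by exact_mod_cast hγ
      have := add_right_cancel hz
      exact mul_left_cancel₀ hγc this
    have : t2 = t1 := by exact_mod_cast this
    simp at ht1 ht2
    linarith
  · rintro w ⟨t, _, rfl⟩
    simp only [Set.mem_setOf_eq]
    set z : ℂ := (γ : ℂ) * t + δ with hzdef
    have hz : z ≠ 0 := hzne t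
    have hb : (2 * I * (δ.im : ℂ)) ≠ 0 := by
      simp [I_ne_zero, hδ]
    have h1 : 2 * I * (δ.im : ℂ) - z = -(starRingEnd ℂ z) := by
      apply Complex.ext <;> simp [hzdef] <;> ring
    have h2 : β / z - β / (2 * I * (δ.im : ℂ))
        = -(β * starRingEnd ℂ z) / (z * (2 * I * (δ.im : ℂ))) := by
      rw [div_sub_div β β hz hb]
      congr 1
      rw [show β * (2 * I * (δ.im : ℂ)) - z * β = β * (2 * I * (δ.im : ℂ) - z) by ring,
        h1]; ring
    rw [h2, norm_div, norm_neg, norm_mul, norm_mul, Complex.norm_conj]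
    have habs : ‖(2 * I * (δ.im : ℂ))‖ = 2 * |δ.im| := by
      simp
    rw [habs]
    have hzabs : ‖z‖ ≠ 0 := by simp [hz]
    field_simp
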